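/- arXiv:1503.05649 — 4 statements merged into one kernel-verified Lean document; each statement's English description precedes it below -/
import Mathlib

section
/- For every C ≥ 0 and every m > 0 there exists ε > 0 with the following property: for every function u : V → ℝ such that u(v) > 0 for every vertex v, such that u(v₀) ≥ m for at least one vertex v₀, and such that for every edge {i,j} of G one has ((η(u(i)) + η(u(j)))/2) · (p(u(i)) − p(u(j)))² ≤ C, it holds that u(v) ≥ ε for every vertex v of G. -/
/-!
A bounded edge energy with weight at least `η m / 2` bounds the drop of `p` across an edge
starting at a value `≥ m`; since `p → -∞` at `0⁺`, this gives a positive lower bound at the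
other end, uniform in the configuration. Iterating along a shortest path, of length less than
the number of vertices, propagates a positive lower bound from `v₀` to every vertex.
-/

open Filter Set

theorem exists_pos_le_of_edgeEnergy_le {p η : ℝ → ℝ}
    (hp_mono : StrictMonoOn p (Ioi 0)) (hp_bot : Tendsto p (nhdsWithin 0 (Ioi 0)) atBot)
    (hη_pos : ∀ u : ℝ, 0 < u → 0 < η u) (hη_mono : MonotoneOn η (Ici 0))
    (C : ℝ) {m : ℝ} (hm : 0 < m) :
    ∃ ε : ℝ, 0 < ε ∧ ∀ a b : ℝ, m ≤ a → 0 < b →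
      ((η a + η b) / 2) * (p a - p b) ^ 2 ≤ C → ε ≤ b := by
  obtain ⟨ε, hpε, hε⟩ :=
    ((hp_bot.eventually (eventually_lt_atBot (p m - √(2 * C / η m)))).and
      self_mem_nhdsWithin).exists
  refine ⟨ε, hε, fun a b hma hb hE => ?_⟩
  have hηm : 0 < η m := hη_pos m hm
  have hweight : η m / 2 ≤ (η a + η b) / 2 := by
    linarith [hη_mono hm.le (hm.le.trans hma) hma, hη_pos b hb]
  have hsq : (p a - p b) ^ 2 ≤ 2 * C / η m := by
    rw [le_div_iff₀ hηm]
    nlinarith [sq_nonneg (p a - p b)]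
  have hdrop : p a - p b ≤ √(2 * C / η m) := (le_abs_self _).trans (Real.abs_le_sqrt hsq)
  have hpa : p m ≤ p a := hp_mono.monotoneOn hm (hm.trans_le hma) hma
  exact (hp_mono.le_iff_le hε hb).1 (by linarith)

namespace SimpleGraph

variable {V : Type*} {G : SimpleGraph V} {S : Set (V → ℝ)}

theorem exists_pos_le_of_walk_length_le
    (hstep : ∀ m : ℝ, 0 < m → ∃ ε : ℝ, 0 < ε ∧
      ∀ u ∈ S, ∀ i j, G.Adj i j → m ≤ u i → ε ≤ u j) (n : ℕ) :
    ∀ m : ℝ, 0 < m → ∃ ε : ℝ, 0 < ε ∧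
      ∀ u ∈ S, ∀ a b (w : G.Walk a b), w.length ≤ n → m ≤ u a → ε ≤ u b := by
  induction n with
  | zero =>
    refine fun m hm => ⟨m, hm, fun u _ a b w hw ha => ?_⟩
    obtain rfl := Walk.eq_of_length_eq_zero (Nat.le_zero.1 hw)
    exact ha
  | succ n ih =>
    intro m hm
    obtain ⟨ε₁, hε₁, hedge⟩ := hstep m hm
    obtain ⟨ε₂, hε₂, hwalk⟩ := ih ε₁ hε₁
    refine ⟨min m ε₂, lt_min hm hε₂, ?_⟩
    rintro u hu a b (_ | ⟨hadj, w⟩) hw ha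
    · exact (min_le_left _ _).trans ha
    · rw [Walk.length_cons] at hw
      exact (min_le_right _ _).trans
        (hwalk u hu _ _ w (by omega) (hedge u hu _ _ hadj ha))

theorem Connected.exists_pos_le_of_adj [Fintype V] (hG : G.Connected)
    (hstep : ∀ m : ℝ, 0 < m → ∃ ε : ℝ, 0 < ε ∧
      ∀ u ∈ S, ∀ i j, G.Adj i j → m ≤ u i → ε ≤ u j)
    {m : ℝ} (hm : 0 < m) :
    ∃ ε : ℝ, 0 < ε ∧ ∀ u ∈ S, (∃ v₀, m ≤ u v₀) → ∀ v, ε ≤ u v := by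
  classical
  obtain ⟨ε, hε, hwalk⟩ := exists_pos_le_of_walk_length_le hstep (Fintype.card V) m hm
  refine ⟨ε, hε, fun u hu ⟨v₀, hv₀⟩ v => ?_⟩
  obtain ⟨w⟩ := hG.preconnected v₀ v
  exact hwalk u hu _ _ w.toPath.1 w.toPath.2.length_lt.le hv₀

end SimpleGraph

theorem graph_uniform_positivity_general
    {V : Type*} [Fintype V] (G : SimpleGraph V) (hG : G.Connected)
    (p : ℝ → ℝ)
    (hp_mono : StrictMonoOn p (Set.Ioi 0))
    (hp_bot : Tendsto p (nhdsWithin 0 (Set.Ioi 0)) atBot)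
    (η : ℝ → ℝ)
    (hη_pos : ∀ u : ℝ, 0 < u → 0 < η u)
    (hη_mono : MonotoneOn η (Set.Ici 0)) :
    ∀ C : ℝ, 0 ≤ C → ∀ m : ℝ, 0 < m → ∃ ε : ℝ, 0 < ε ∧
      ∀ u : V → ℝ, (∀ v, 0 < u v) → (∃ v₀, m ≤ u v₀) →
        (∀ i j, G.Adj i j →
          ((η (u i) + η (u j)) / 2) * (p (u i) - p (u j)) ^ 2 ≤ C) →
        ∀ v, ε ≤ u v := by
  intro C _ m hm
  let S : Set (V → ℝ) := {u | (∀ v, 0 < u v) ∧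
    ∀ i j, G.Adj i j → ((η (u i) + η (u j)) / 2) * (p (u i) - p (u j)) ^ 2 ≤ C}
  have hstep : ∀ m : ℝ, 0 < m → ∃ ε : ℝ, 0 < ε ∧
      ∀ u ∈ S, ∀ i j, G.Adj i j → m ≤ u i → ε ≤ u j := fun m hm => by
    obtain ⟨ε, hε, hedge⟩ := exists_pos_le_of_edgeEnergy_le hp_mono hp_bot hη_pos hη_mono C hm
    exact ⟨ε, hε, fun u ⟨hpos, hE⟩ i j hij hi => hedge _ _ hi (hpos j) (hE i j hij)⟩
  obtain ⟨ε, hε, hbound⟩ := hG.exists_pos_le_of_adj hstep hm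
  exact ⟨ε, hε, fun u hpos hv₀ hE => hbound u ⟨hpos, hE⟩ hv₀⟩

/-- Discrete Harnack-type uniform positivity bound propagated along the
connectivity graph (Lemma 3.7 of Cancès–Guichard). -/
theorem graph_uniform_positivity
    {V : Type*} [Fintype V] [Nonempty V] (G : SimpleGraph V) (hG : G.Connected)
    (p : ℝ → ℝ) (hp_cont : ContinuousOn p (Set.Ioi 0))
    (hp_mono : StrictMonoOn p (Set.Ioi 0))
    (hp_bot : Tendsto p (nhdsWithin 0 (Set.Ioi 0)) atBot)
    (η : ℝ → ℝ) (hη_cont : Continuous η) (hη0 : η 0 = 0)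
    (hη_pos : ∀ u : ℝ, 0 < u → 0 < η u)
    (hη_mono : MonotoneOn η (Set.Ici 0)) :
    ∀ C : ℝ, 0 ≤ C → ∀ m : ℝ, 0 < m → ∃ ε : ℝ, 0 < ε ∧
      ∀ u : V → ℝ, (∀ v, 0 < u v) → (∃ v₀, m ≤ u v₀) →
        (∀ i j, G.Adj i j →
          ((η (u i) + η (u j)) / 2) * (p (u i) - p (u j)) ^ 2 ≤ C) →
        ∀ v, ε ≤ u v :=
  graph_uniform_positivity_general G hG p hp_mono hp_bot η hη_pos hη_mono
end

section
/- There exist constants C₁ and C₂, depending only on p, M and μ(Ω), such that for every measurable integrable u : Ω → ℝ with Γ∘u integrable one has (1/2)·E(u) + C₁ ≤ ∫_Ω Γ(u) dμ ≤ 2·E(u) + C₂. In particular, E is bounded from below uniformly over all such u. -/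
open Filter MeasureTheory

/-!
Since `p` is nondecreasing, `Γ` is convex with subgradient `p s - p 1` at `s`, and since `p` is
unbounded in both directions these slopes are arbitrarily steep, so `Γ` grows superlinearly:
`2 M |t| ≤ Γ t + K`. Hence `|u V| ≤ Γ(u) / 2 + K / 2`, so the potential term `∫ u V` is
bounded by half the entropy plus a constant, and both comparisons follow.
-/

noncomputable def entropy (p : ℝ → ℝ) (c t : ℝ) : ℝ :=
  ∫ a in c..t, (p a - p c)

namespace entropy

variable {p : ℝ → ℝ}

theorem nonneg (hp : Monotone p) (c t : ℝ) : 0 ≤ entropy p c t := by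
  unfold entropy
  rcases le_total c t with hct | htc
  · exact intervalIntegral.integral_nonneg hct fun a ha => sub_nonneg.2 (hp ha.1)
  · rw [intervalIntegral.integral_symm, ← intervalIntegral.integral_neg]
    exact intervalIntegral.integral_nonneg htc fun a ha => by simpa using hp ha.2

theorem eq_add_add (hp : Monotone p) (c s t : ℝ) :
    entropy p c t = entropy p c s + entropy p s t + (t - s) * (p s - p c) := by
  have hint : ∀ a b, IntervalIntegrable (fun x => p x - p c) volume a b := fun a b =>
    hp.intervalIntegrable.sub intervalIntegrable_const
  have hshift : ∫ a in s..t, (p a - p c) = entropy p s t + (t - s) * (p s - p c) := by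
    rw [entropy, ← smul_eq_mul, ← intervalIntegral.integral_const,
      ← intervalIntegral.integral_add (hp.intervalIntegrable.sub intervalIntegrable_const)
        intervalIntegrable_const]
    simp only [sub_add_sub_cancel]
  rw [add_assoc, ← hshift]
  exact (intervalIntegral.integral_add_adjacent_intervals (hint c s) (hint s t)).symm

/-- The subgradient inequality of the convex function `entropy p c` at `s`. -/
theorem sub_mul_le (hp : Monotone p) (c s t : ℝ) : (t - s) * (p s - p c) ≤ entropy p c t := by
  rw [eq_add_add hp c s t]
  linarith [nonneg hp c s, nonneg hp s t]

theorem exists_mul_abs_le_add (hp : Monotone p) (hp_top : Tendsto p atTop atTop)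
    (hp_bot : Tendsto p atBot atBot) (c A : ℝ) :
    ∃ K, ∀ t, A * |t| ≤ entropy p c t + K := by
  obtain ⟨b, hb⟩ := (hp_top.eventually_ge_atTop (p c + A)).exists
  obtain ⟨a, ha⟩ := (hp_bot.eventually_le_atBot (p c - A)).exists
  refine ⟨|b * (p b - p c)| + |a * (p a - p c)|, fun t => ?_⟩
  have hKb := le_abs_self (b * (p b - p c))
  have hKa := le_abs_self (a * (p a - p c))
  rcases le_total 0 t with ht | ht
  · rw [abs_of_nonneg ht]
    linarith [sub_mul_le hp c b t, mul_le_mul_of_nonneg_right hb ht, abs_nonneg (a * (p a - p c))]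
  · rw [abs_of_nonpos ht]
    linarith [sub_mul_le hp c a t, mul_le_mul_of_nonpos_right ha ht, abs_nonneg (b * (p b - p c))]

end entropy

theorem integrable_and_abs_integral_le_of_abs_le {Ω : Type*} [MeasurableSpace Ω] {μ : Measure Ω}
    [IsFiniteMeasure μ] {f g : Ω → ℝ} {K : ℝ} (hf : Integrable f μ)
    (hg : AEStronglyMeasurable g μ) (h : ∀ᵐ x ∂μ, |g x| ≤ f x + K) :
    Integrable g μ ∧ |∫ x, g x ∂μ| ≤ ∫ x, f x ∂μ + μ.real Set.univ * K := by
  have hfK : Integrable (fun x => f x + K) μ := hf.add (integrable_const K)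
  refine ⟨hfK.mono' hg h, ?_⟩
  have := norm_integral_le_of_norm_le (f := g) hfK h
  rwa [Real.norm_eq_abs, integral_add hf (integrable_const K), integral_const, smul_eq_mul] at this

theorem free_energy_entropy_comparison_general
    {Ω : Type*} [MeasurableSpace Ω] (μ : Measure Ω) [IsFiniteMeasure μ]
    (p : ℝ → ℝ) (hp_mono : Monotone p)
    (hp_top : Tendsto p atTop atTop)
    (hp_bot : Tendsto p atBot atBot)
    (Γ : ℝ → ℝ) (hΓ : ∀ u : ℝ, Γ u = ∫ a in (1:ℝ)..u, (p a - p 1))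
    (V : Ω → ℝ) (hV : Measurable V) (M : ℝ) (hM : ∀ᵐ x ∂μ, |V x| ≤ M) :
    ∃ C₁ C₂ C₃ : ℝ, ∀ u : Ω → ℝ, Measurable u → Integrable u μ →
      Integrable (fun x => Γ (u x)) μ →
      (1 / 2) * (∫ x, (Γ (u x) + u x * V x) ∂μ) + C₁ ≤ ∫ x, Γ (u x) ∂μ ∧
      (∫ x, Γ (u x) ∂μ) ≤ 2 * (∫ x, (Γ (u x) + u x * V x) ∂μ) + C₂ ∧
      C₃ ≤ ∫ x, (Γ (u x) + u x * V x) ∂μ := by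
  obtain rfl : Γ = entropy p 1 := funext hΓ
  obtain ⟨K, hK⟩ := entropy.exists_mul_abs_le_add hp_mono hp_top hp_bot 1 (2 * M)
  set c := μ.real Set.univ * (K / 2) with hc
  refine ⟨-c, 2 * c, -c, fun u hu _ hΓu => ?_⟩
  have hpointwise : ∀ᵐ x ∂μ, |u x * V x| ≤ entropy p 1 (u x) / 2 + K / 2 := by
    filter_upwards [hM] with x hx
    rw [abs_mul]
    linarith [mul_le_mul_of_nonneg_left hx (abs_nonneg (u x)), hK (u x)]
  obtain ⟨huV, hJ⟩ := integrable_and_abs_integral_le_of_abs_le (g := fun x => u x * V x)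
    (hΓu.div_const 2) (hu.mul hV).aestronglyMeasurable hpointwise
  rw [integral_div, ← hc] at hJ
  have hI : 0 ≤ ∫ x, entropy p 1 (u x) ∂μ :=
    integral_nonneg fun x => entropy.nonneg hp_mono 1 (u x)
  rw [integral_add hΓu huV]
  obtain ⟨hJlow, hJhigh⟩ := abs_le.1 hJ
  refine ⟨by linarith, by linarith, by linarith⟩

/-- Lemma 3.4 of Cancès–Guichard: comparison between the free energy
`E(u) = ∫ (Γ(u) + u·V) dμ` and the entropy `∫ Γ(u) dμ`; in particular the free
energy is bounded from below uniformly. -/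
theorem free_energy_entropy_comparison
    {Ω : Type*} [MeasurableSpace Ω] (μ : Measure Ω) [IsFiniteMeasure μ]
    (p : ℝ → ℝ) (hp_mono : Monotone p)
    (hp_loc : LocallyIntegrable p volume)
    (hp_top : Tendsto p atTop atTop)
    (hp_bot : Tendsto p atBot atBot)
    (Γ : ℝ → ℝ) (hΓ : ∀ u : ℝ, Γ u = ∫ a in (1:ℝ)..u, (p a - p 1))
    (V : Ω → ℝ) (hV : Measurable V) (M : ℝ) (hM : ∀ᵐ x ∂μ, |V x| ≤ M) :
    ∃ C₁ C₂ C₃ : ℝ, ∀ u : Ω → ℝ, Measurable u → Integrable u μ →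
      Integrable (fun x => Γ (u x)) μ →
      (1 / 2) * (∫ x, (Γ (u x) + u x * V x) ∂μ) + C₁ ≤ ∫ x, Γ (u x) ∂μ ∧
      (∫ x, Γ (u x) ∂μ) ≤ 2 * (∫ x, (Γ (u x) + u x * V x) ∂μ) + C₂ ∧
      C₃ ≤ ∫ x, (Γ (u x) + u x * V x) ∂μ :=
  free_energy_entropy_comparison_general μ p hp_mono hp_top hp_bot Γ hΓ V hV M hM
end

section
/- With ū_i := (1/vol(ω_i)) ∫_{ω_i} u₀ dx, one has Σ_{i=1}^{N} [ vol(ω_i)·Γ(ū_i) + V(x_i)·∫_{ω_i} u₀ dx ] ≤ ∫_Ω (Γ(u₀) + u₀·V) dx + L·h·∫_Ω u₀ dx. -/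
open MeasureTheory

/-!
On each cell, Jensen's inequality for the convex `Γ` bounds `vol(ω_i) Γ(ū_i)` by `∫_{ω_i} Γ(u₀)`,
and since every point of `ω_i` lies within `h` of `x_i`, the Lipschitz bound
`V(x_i) ≤ V(x) + L h` integrated against `u₀ ≥ 0` bounds `V(x_i) ∫_{ω_i} u₀`.
Summing over the cells of the partition gives the integrals over `Ω`.
-/

theorem ConvexOn.measureReal_mul_map_inv_mul_setIntegral_le {α : Type*} [MeasurableSpace α]
    {μ : Measure α} {s : Set α} {g : ℝ → ℝ} (hg : ConvexOn ℝ Set.univ g) (hs : μ s ≠ ⊤)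
    {f : α → ℝ} (hfi : IntegrableOn f s μ) (hgi : IntegrableOn (g ∘ f) s μ) :
    μ.real s * g ((μ.real s)⁻¹ * ∫ x in s, f x ∂μ) ≤ ∫ x in s, g (f x) ∂μ := by
  rcases eq_or_ne (μ s) 0 with hs0 | hs0
  · simp [measureReal_def, hs0, Measure.restrict_eq_zero.2 hs0]
  have hjensen := hg.map_set_average_le (hg.continuousOn isOpen_univ) isClosed_univ hs0 hs
    (ae_of_all _ fun x => Set.mem_univ (f x)) hfi hgi
  rw [setAverage_eq, setAverage_eq, smul_eq_mul, smul_eq_mul] at hjensen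
  have hpos : 0 < μ.real s := ENNReal.toReal_pos hs0 hs
  calc μ.real s * g ((μ.real s)⁻¹ * ∫ x in s, f x ∂μ)
      ≤ μ.real s * ((μ.real s)⁻¹ * ∫ x in s, g (f x) ∂μ) :=
        mul_le_mul_of_nonneg_left hjensen hpos.le
    _ = ∫ x in s, g (f x) ∂μ := mul_inv_cancel_left₀ hpos.ne' _

namespace LipschitzWith

variable {α : Type*} [PseudoMetricSpace α] {K : NNReal} {V : α → ℝ} {c : α} {h : ℝ}

theorem abs_sub_le_of_dist_le (hV : LipschitzWith K V) {x : α} (hx : dist x c ≤ h) :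
    |V x - V c| ≤ K * h := by
  rw [← Real.dist_eq]
  exact (hV.dist_le_mul x c).trans (mul_le_mul_of_nonneg_left hx K.coe_nonneg)

variable [MeasurableSpace α] [OpensMeasurableSpace α] {μ : Measure α} {s : Set α} {f : α → ℝ}

theorem integrableOn_mul_of_dist_le (hV : LipschitzWith K V) (hs : MeasurableSet s)
    (hsc : ∀ x ∈ s, dist x c ≤ h) (hf : IntegrableOn f s μ) :
    IntegrableOn (fun x => f x * V x) s μ := by
  refine hf.mul_bdd (c := |V c| + K * h) hV.continuous.aestronglyMeasurable
    (ae_restrict_of_forall_mem hs fun x hx => ?_)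
  have := hV.abs_sub_le_of_dist_le (hsc x hx)
  rw [Real.norm_eq_abs]
  linarith [abs_sub_abs_le_abs_sub (V x) (V c)]

theorem mul_setIntegral_le (hV : LipschitzWith K V) (hs : MeasurableSet s)
    (hsc : ∀ x ∈ s, dist x c ≤ h) (hf₀ : ∀ x ∈ s, 0 ≤ f x) (hf : IntegrableOn f s μ) :
    V c * ∫ x in s, f x ∂μ ≤ (∫ x in s, f x * V x ∂μ) + K * h * ∫ x in s, f x ∂μ := by
  have hfV := hV.integrableOn_mul_of_dist_le hs hsc hf
  calc V c * ∫ x in s, f x ∂μ = ∫ x in s, V c * f x ∂μ := (integral_const_mul _ _).symm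
    _ ≤ ∫ x in s, (f x * V x + K * h * f x) ∂μ := by
        refine setIntegral_mono_on (hf.const_mul _) (hfV.add (hf.const_mul _)) hs fun x hx => ?_
        have := (abs_sub_le_iff.1 (hV.abs_sub_le_of_dist_le (hsc x hx))).2
        nlinarith [hf₀ x hx]
    _ = (∫ x in s, f x * V x ∂μ) + K * h * ∫ x in s, f x ∂μ := by
        rw [integral_add hfV (hf.const_mul _), integral_const_mul]

end LipschitzWith

theorem discrete_entropy_of_initial_data_general
    {d : ℕ} (Γ : ℝ → ℝ) (hΓ_convex : ConvexOn ℝ Set.univ Γ)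
    (Ω : Set (EuclideanSpace ℝ (Fin d)))
    (N : ℕ) (ω : Fin N → Set (EuclideanSpace ℝ (Fin d)))
    (hω_meas : ∀ i, MeasurableSet (ω i))
    (hω_disj : ∀ i j, i ≠ j → Disjoint (ω i) (ω j))
    (hω_cover : (⋃ i, ω i) = Ω)
    (hω_fin : ∀ i, volume (ω i) < ⊤)
    (h : ℝ)
    (xc : Fin N → EuclideanSpace ℝ (Fin d))
    (hnear : ∀ i, ∀ x ∈ ω i, ‖x - xc i‖ ≤ h)
    (L : NNReal) (V : EuclideanSpace ℝ (Fin d) → ℝ) (hV : LipschitzWith L V)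
    (u₀ : EuclideanSpace ℝ (Fin d) → ℝ) (hu₀_nonneg : ∀ x, 0 ≤ u₀ x)
    (hu₀_int : IntegrableOn u₀ Ω volume)
    (hΓu₀_int : IntegrableOn (fun x => Γ (u₀ x)) Ω volume) :
    ∑ i : Fin N,
        ((volume (ω i)).toReal * Γ ((volume (ω i)).toReal⁻¹ * ∫ x in ω i, u₀ x) +
          V (xc i) * ∫ x in ω i, u₀ x)
      ≤ (∫ x in Ω, (Γ (u₀ x) + u₀ x * V x)) + (L : ℝ) * h * ∫ x in Ω, u₀ x := by
  have hsub : ∀ i, ω i ⊆ Ω := fun i => hω_cover ▸ Set.subset_iUnion ω i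
  have hu₀_cell : ∀ i, IntegrableOn u₀ (ω i) := fun i => hu₀_int.mono_set (hsub i)
  have hdist : ∀ i, ∀ x ∈ ω i, dist x (xc i) ≤ h :=
    fun i x hx => (dist_eq_norm x (xc i)).trans_le (hnear i x hx)
  have hu₀V_int : IntegrableOn (fun x => u₀ x * V x) Ω := hω_cover ▸ integrableOn_finite_iUnion.2
    fun i => hV.integrableOn_mul_of_dist_le (hω_meas i) (hdist i) (hu₀_cell i)
  have hsplit : ∀ f : EuclideanSpace ℝ (Fin d) → ℝ, IntegrableOn f Ω →
      ∫ x in Ω, f x = ∑ i, ∫ x in ω i, f x := by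
    intro f hf
    rw [← hω_cover] at hf ⊢
    rw [integral_iUnion hω_meas hω_disj hf, tsum_fintype]
  rw [integral_add hΓu₀_int hu₀V_int, hsplit _ hΓu₀_int, hsplit _ hu₀V_int, hsplit _ hu₀_int,
    Finset.mul_sum, ← Finset.sum_add_distrib, ← Finset.sum_add_distrib]
  refine Finset.sum_le_sum fun i _ => ?_
  have hjensen := hΓ_convex.measureReal_mul_map_inv_mul_setIntegral_le (hω_fin i).ne
    (hu₀_cell i) (hΓu₀_int.mono_set (hsub i))
  have hlip := hV.mul_setIntegral_le (hω_meas i) (hdist i) (fun x _ => hu₀_nonneg x) (hu₀_cell i)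
  rw [measureReal_def] at hjensen
  linarith

/-- Lemma 3.1 of Cancès–Guichard: the discrete entropy of the cell-averaged
initial data is bounded by the continuous free energy plus an `O(h)` error. -/
theorem discrete_entropy_of_initial_data
    {d : ℕ} (Γ : ℝ → ℝ) (hΓ_convex : ConvexOn ℝ Set.univ Γ)
    (Ω : Set (EuclideanSpace ℝ (Fin d))) (hΩ : MeasurableSet Ω)
    (N : ℕ) (ω : Fin N → Set (EuclideanSpace ℝ (Fin d)))
    (hω_meas : ∀ i, MeasurableSet (ω i))
    (hω_disj : ∀ i j, i ≠ j → Disjoint (ω i) (ω j))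
    (hω_cover : (⋃ i, ω i) = Ω)
    (hω_pos : ∀ i, 0 < volume (ω i)) (hω_fin : ∀ i, volume (ω i) < ⊤)
    (h : ℝ) (hh : 0 ≤ h)
    (xc : Fin N → EuclideanSpace ℝ (Fin d))
    (hnear : ∀ i, ∀ x ∈ ω i, ‖x - xc i‖ ≤ h)
    (L : NNReal) (V : EuclideanSpace ℝ (Fin d) → ℝ) (hV : LipschitzWith L V)
    (u₀ : EuclideanSpace ℝ (Fin d) → ℝ) (hu₀_nonneg : ∀ x, 0 ≤ u₀ x)
    (hu₀_int : IntegrableOn u₀ Ω volume)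
    (hΓu₀_int : IntegrableOn (fun x => Γ (u₀ x)) Ω volume) :
    ∑ i : Fin N,
        ((volume (ω i)).toReal * Γ ((volume (ω i)).toReal⁻¹ * ∫ x in ω i, u₀ x) +
          V (xc i) * ∫ x in ω i, u₀ x)
      ≤ (∫ x in Ω, (Γ (u₀ x) + u₀ x * V x)) + (L : ℝ) * h * ∫ x in Ω, u₀ x :=
  discrete_entropy_of_initial_data_general Γ hΓ_convex Ω N ω hω_meas hω_disj hω_cover hω_fin h xc
    hnear L V hV u₀ hu₀_nonneg hu₀_int hΓu₀_int
end

section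
/- For every vector v ∈ ℝⁿ one has Σ_{i} ( Σ_{j} |A_{ij}| ) v_i² ≤ √n · (λ₊/λ₋) · (v · A v), where v · A v = Σ_{i,j} v_i A_{ij} v_j. In particular the constant C of the paper's Lemma A.2 can be taken equal to √n times the spectral condition number of A. -/
/-!
For a symmetric matrix with `0 ≤ A ≤ μ` in the sense of quadratic forms, Cauchy–Schwarz for the
form `(x, y) ↦ x ⬝ A y` applied to `v` and `A v` gives `A² ≤ μ A`; evaluated at a basis vector this
bounds the Euclidean norm of each row by `μ`. Hence each absolute row sum is at most `√n μ`, and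
`μ |v|² ≤ (μ / λ₋) (v ⬝ A v)` finishes the proof.
-/

open Finset Matrix

theorem Finset.sum_abs_le_sqrt_card_mul_sqrt_sum_sq {ι : Type*} (s : Finset ι) (f : ι → ℝ) :
    ∑ i ∈ s, |f i| ≤ √(#s : ℝ) * √(∑ i ∈ s, f i ^ 2) := by
  rw [← Real.sqrt_mul (by positivity)]
  apply Real.le_sqrt_of_sq_le
  simpa only [sq_abs] using sq_sum_le_card_mul_sum_sq (s := s) (f := fun i => |f i|)

namespace Matrix

theorem dotProduct_self_nonneg {ι R : Type*} [Fintype ι] [Ring R] [LinearOrder R]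
    [IsStrictOrderedRing R] (v : ι → R) : 0 ≤ v ⬝ᵥ v :=
  Finset.sum_nonneg fun i _ => mul_self_nonneg (v i)

variable {ι : Type*} [Fintype ι] {A : Matrix ι ι ℝ}

theorem dotProduct_mulVec_sq_le (hA : A.IsSymm) (hA₀ : ∀ v, 0 ≤ v ⬝ᵥ A *ᵥ v) (x y : ι → ℝ) :
    (x ⬝ᵥ A *ᵥ y) ^ 2 ≤ (x ⬝ᵥ A *ᵥ x) * (y ⬝ᵥ A *ᵥ y) := by
  classical
  simpa only [toBilin'_apply'] using A.toBilin'.apply_sq_le_of_symm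
    (by simpa only [toBilin'_apply'] using hA₀)
    (LinearMap.BilinForm.isSymm_iff.mp (isSymm_toBilin'_iff_isSymm.mpr hA)) x y

variable {μ : ℝ} (hA : A.IsSymm) (hA₀ : ∀ v, 0 ≤ v ⬝ᵥ A *ᵥ v)
  (hAμ : ∀ v, v ⬝ᵥ A *ᵥ v ≤ μ * (v ⬝ᵥ v))
include hA hA₀ hAμ

theorem mulVec_dotProduct_mulVec_le (v : ι → ℝ) : A *ᵥ v ⬝ᵥ A *ᵥ v ≤ μ * (v ⬝ᵥ A *ᵥ v) := by
  set w := A *ᵥ v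
  rcases eq_or_ne w 0 with hw0 | hw0
  · simp [hw0]
  have hw : v ⬝ᵥ A *ᵥ w = w ⬝ᵥ w := by
    rw [dotProduct_mulVec, ← hA.eq, vecMul_transpose]
  have key : (w ⬝ᵥ w) * (w ⬝ᵥ w) ≤ (w ⬝ᵥ w) * (μ * (v ⬝ᵥ w)) :=
    calc (w ⬝ᵥ w) * (w ⬝ᵥ w) = (v ⬝ᵥ A *ᵥ w) ^ 2 := by rw [hw, sq]
      _ ≤ (v ⬝ᵥ w) * (w ⬝ᵥ A *ᵥ w) := dotProduct_mulVec_sq_le hA hA₀ v w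
      _ ≤ (v ⬝ᵥ w) * (μ * (w ⬝ᵥ w)) := mul_le_mul_of_nonneg_left (hAμ w) (hA₀ v)
      _ = (w ⬝ᵥ w) * (μ * (v ⬝ᵥ w)) := by ring
  exact le_of_mul_le_mul_left key <|
    (dotProduct_self_nonneg w).lt_of_ne' (mt dotProduct_self_eq_zero.mp hw0)

theorem sqrt_sum_row_sq_le (i : ι) : √(∑ j, A i j ^ 2) ≤ μ := by
  classical
  have hcol : A *ᵥ Pi.single i 1 = A i := by
    funext j
    simp [hA.apply i j]
  have hdiag : Pi.single i 1 ⬝ᵥ A *ᵥ Pi.single i 1 = A i i := by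
    rw [hcol, single_one_dotProduct]
  have hAii_le : A i i ≤ μ := by
    simpa [hdiag] using hAμ (Pi.single i 1)
  have hAii_nonneg : 0 ≤ A i i := hdiag ▸ hA₀ (Pi.single i 1)
  have hrow : A i ⬝ᵥ A i ≤ μ * A i i := by
    have := mulVec_dotProduct_mulVec_le hA hA₀ hAμ (Pi.single i 1)
    rwa [hdiag, hcol] at this
  rw [Real.sqrt_le_left (hAii_nonneg.trans hAii_le)]
  calc ∑ j, A i j ^ 2 = A i ⬝ᵥ A i := by simp only [dotProduct, sq]
    _ ≤ μ * A i i := hrow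
    _ ≤ μ ^ 2 := by nlinarith

theorem sum_row_abs_le (i : ι) : ∑ j, |A i j| ≤ √(Fintype.card ι) * μ :=
  (Finset.sum_abs_le_sqrt_card_mul_sqrt_sum_sq univ (A i)).trans <|
    mul_le_mul_of_nonneg_left (sqrt_sum_row_sq_le hA hA₀ hAμ i) (Real.sqrt_nonneg _)

theorem sum_row_abs_mul_sq_le (v : ι → ℝ) :
    ∑ i, (∑ j, |A i j|) * v i ^ 2 ≤ √(Fintype.card ι) * μ * (v ⬝ᵥ v) := by
  rw [dotProduct, mul_sum]
  refine sum_le_sum fun i _ => ?_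
  rw [← sq]
  exact mul_le_mul_of_nonneg_right (sum_row_abs_le hA hA₀ hAμ i) (sq_nonneg _)

end Matrix

theorem weighted_sum_le_condition_number_quadratic_form_general
    (n : ℕ) (A : Matrix (Fin n) (Fin n) ℝ) (hA : A.IsSymm)
    (lamLow lamHigh : ℝ) (h₀ : 0 < lamLow) (hle : lamLow ≤ lamHigh)
    (hlow : ∀ v : Fin n → ℝ,
      lamLow * ∑ i, (v i) ^ 2 ≤ ∑ i, ∑ j, v i * A i j * v j)
    (hup : ∀ v : Fin n → ℝ,
      (∑ i, ∑ j, v i * A i j * v j) ≤ lamHigh * ∑ i, (v i) ^ 2) :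
    ∀ v : Fin n → ℝ,
      (∑ i, (∑ j, |A i j|) * (v i) ^ 2) ≤
        Real.sqrt n * (lamHigh / lamLow) * ∑ i, ∑ j, v i * A i j * v j := by
  have hquad (v : Fin n → ℝ) : ∑ i, ∑ j, v i * A i j * v j = v ⬝ᵥ A *ᵥ v := by
    rw [← toBilin'_apply', toBilin'_apply]
  have hsq (v : Fin n → ℝ) : ∑ i, v i ^ 2 = v ⬝ᵥ v := by
    simp only [dotProduct, sq]
  simp only [hquad, hsq] at hlow hup ⊢
  have hA₀ (v : Fin n → ℝ) : 0 ≤ v ⬝ᵥ A *ᵥ v :=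
    (mul_nonneg h₀.le (dotProduct_self_nonneg v)).trans (hlow v)
  intro v
  calc ∑ i, (∑ j, |A i j|) * v i ^ 2 ≤ √n * lamHigh * (v ⬝ᵥ v) := by
        simpa only [Fintype.card_fin] using sum_row_abs_mul_sq_le hA hA₀ hup v
    _ = √n * (lamHigh / lamLow) * (lamLow * (v ⬝ᵥ v)) := by field_simp
    _ ≤ √n * (lamHigh / lamLow) * (v ⬝ᵥ A *ᵥ v) :=
        mul_le_mul_of_nonneg_left (hlow v) (by have := h₀.trans_le hle; positivity)

/-- Quantitative form of Lemma A.2 of Cancès–Guichard: for a symmetric positive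
definite matrix with Rayleigh quotient between `lamLow` and `lamHigh`, one has
`Σᵢ (Σⱼ |Aᵢⱼ|) vᵢ² ≤ √n · (lamHigh/lamLow) · (v ⬝ A v)`. -/
theorem weighted_sum_le_condition_number_quadratic_form
    (n : ℕ) (hn : 1 ≤ n) (A : Matrix (Fin n) (Fin n) ℝ) (hA : A.IsSymm)
    (lamLow lamHigh : ℝ) (h₀ : 0 < lamLow) (hle : lamLow ≤ lamHigh)
    (hlow : ∀ v : Fin n → ℝ,
      lamLow * ∑ i, (v i) ^ 2 ≤ ∑ i, ∑ j, v i * A i j * v j)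
    (hup : ∀ v : Fin n → ℝ,
      (∑ i, ∑ j, v i * A i j * v j) ≤ lamHigh * ∑ i, (v i) ^ 2) :
    ∀ v : Fin n → ℝ,
      (∑ i, (∑ j, |A i j|) * (v i) ^ 2) ≤
        Real.sqrt n * (lamHigh / lamLow) * ∑ i, ∑ j, v i * A i j * v j :=
  weighted_sum_le_condition_number_quadratic_form_general n A hA lamLow lamHigh h₀ hle hlow hup
end
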